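/- arXiv:1604.05281 — 4 statements merged into one kernel-verified Lean document; each statement's English description precedes it below -/
import Mathlib

section
/- Let H ⊆ G be subgroups of the symmetric group S_n. If H is a Jacobi subset of S_n, then G is a Jacobi subset of S_n. -/
/-- The left-normed Lie bracket `[a₁,…,aₘ]` of a list of elements of a Lie ring,
defined by `[a₁] = a₁` and `[a₁,…,aₘ] = [[a₁,…,a_{m-1}], aₘ]` (and `0` for the empty list). -/
def lieWord {L : Type*} [LieRing L] : List L → L
  | [] => 0
  | x :: xs => xs.foldl (fun a b => ⁅a, b⁆) x

/-- A subset `T ⊆ Sₙ` is Jacobi if `∑_{σ ∈ T} [a_{σ(1)},…,a_{σ(n)}] = 0` for all elements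
`a₁,…,aₙ` of any Lie ring (= Lie algebra over `ℤ`). -/
def IsJacobi {n : ℕ} (T : Set (Equiv.Perm (Fin n))) : Prop :=
  ∀ (L : Type) [LieRing L], ∀ a : Fin n → L,
    ∑ᶠ σ ∈ T, lieWord (List.ofFn fun i => a (σ i)) = 0

/-- If `H ≤ G` are subgroups of `Sₙ` and `H` is Jacobi, then `G` is Jacobi. -/
theorem subgroup_isJacobi_of_le {n : ℕ} (H G : Subgroup (Equiv.Perm (Fin n))) (hHG : H ≤ G)
    (hH : IsJacobi (H : Set (Equiv.Perm (Fin n)))) :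
    IsJacobi (G : Set (Equiv.Perm (Fin n))) := by
  intro L _ a
  classical
  have hHfin : ∀ (b : Fin n → L),
      ∑ τ ∈ (H : Set (Equiv.Perm (Fin n))).toFinset,
        lieWord (List.ofFn fun i => b (τ i)) = 0 := by
    intro b
    have h := hH L b
    rwa [← Set.coe_toFinset (H : Set (Equiv.Perm (Fin n))), finsum_mem_coe_finset] at h
  rw [← Set.coe_toFinset (G : Set (Equiv.Perm (Fin n))), finsum_mem_coe_finset]
  set f : Equiv.Perm (Fin n) → L := fun σ => lieWord (List.ofFn fun i => a (σ i)) with hf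
  have hfib := Finset.sum_fiberwise_of_maps_to
    (g := fun σ : Equiv.Perm (Fin n) => (QuotientGroup.mk σ : Equiv.Perm (Fin n) ⧸ H))
    (s := (G : Set (Equiv.Perm (Fin n))).toFinset)
    (t := (Finset.univ : Finset (Equiv.Perm (Fin n) ⧸ H)))
    (fun x _ => Finset.mem_univ _) f
  rw [← hfib]
  refine Finset.sum_eq_zero fun q _ => ?_
  by_cases hq : ∃ g, g ∈ G ∧ (QuotientGroup.mk g : Equiv.Perm (Fin n) ⧸ H) = q
  · obtain ⟨g, hg, rfl⟩ := hq
    have hreindex :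
        ∑ σ ∈ ((G : Set (Equiv.Perm (Fin n))).toFinset.filter
            (fun σ => (QuotientGroup.mk σ : Equiv.Perm (Fin n) ⧸ H) = QuotientGroup.mk g)),
          f σ
        = ∑ τ ∈ (H : Set (Equiv.Perm (Fin n))).toFinset, f (g * τ) := by
      refine Finset.sum_nbij' (i := fun σ => g⁻¹ * σ) (j := fun τ => g * τ)
        ?_ ?_ ?_ ?_ ?_
      · intro σ hσ
        simp only [Finset.mem_filter, Set.mem_toFinset, SetLike.mem_coe] at hσ
        obtain ⟨-, hσq⟩ := hσ
        have : g⁻¹ * σ ∈ H := by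
          rw [eq_comm, QuotientGroup.eq] at hσq
          exact hσq
        simpa [Set.mem_toFinset] using this
      · intro τ hτ
        simp only [Set.mem_toFinset, SetLike.mem_coe] at hτ
        simp only [Finset.mem_filter, Set.mem_toFinset, SetLike.mem_coe]
        refine ⟨G.mul_mem hg (hHG hτ), ?_⟩
        rw [eq_comm, QuotientGroup.eq]
        simpa using hτ
      · intro σ _; group
      · intro τ _; group
      · intro σ _; simp
    rw [hreindex]
    have : ∀ τ : Equiv.Perm (Fin n), f (g * τ) =
        lieWord (List.ofFn fun i => (fun j => a (g j)) (τ i)) := by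
      intro τ
      simp [hf, Equiv.Perm.mul_apply]
    simp only [this]
    exact hHfin (fun j => a (g j))
  · rw [Finset.sum_eq_zero]
    intro σ hσ
    exfalso
    simp only [Finset.mem_filter, Set.mem_toFinset, SetLike.mem_coe] at hσ
    exact hq ⟨σ, hσ.1, hσ.2⟩
end

section
/- Let n ≥ 3 and let G be a subgroup of the symmetric group S_n containing the 3-cycle (1,2,3). Then G is a Jacobi subset of S_n. -/
/-!
Let `c = (0 1 2)`. For every `σ`, the words of `σ`, `σc` and `σc²` are the words of
`x :: y :: z :: l`, `y :: z :: x :: l` and `z :: x :: y :: l` for the same `x, y, z, l`; since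
bracketing successively with the letters of `l` is additive, their sum is the image of
`⁅⁅x, y⁆, z⁆ + ⁅⁅y, z⁆, x⁆ + ⁅⁅z, x⁆, y⁆ = 0`. As `G` is the disjoint union of the cosets
`σ⟨c⟩ = {σ, σc, σc²}`, the whole sum vanishes.
-/

open Equiv Finset

theorem Subgroup.sum_eq_sum_quotient_sum_out_mul {G M : Type*} [Group G] [Fintype G]
    [AddCommMonoid M] (H : Subgroup G) [Fintype (G ⧸ H)] [Fintype H] (f : G → M) :
    ∑ g, f g = ∑ q : G ⧸ H, ∑ h : H, f (q.out * h) := by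
  rw [← Fintype.sum_prod_type']
  refine (Fintype.sum_bijective (fun p : (G ⧸ H) × H => p.1.out * p.2) ⟨?_, fun g => ?_⟩ _ _
    fun _ => rfl).symm
  · rintro ⟨q, h⟩ ⟨q', h'⟩ he
    obtain rfl : q = q' := by
      simpa [QuotientGroup.mk_mul_of_mem] using congrArg (QuotientGroup.mk (s := H)) he
    simp_all
  · exact ⟨(g, ⟨(g : G ⧸ H).out⁻¹ * g, QuotientGroup.eq.mp (QuotientGroup.out_eq' _)⟩), by simp⟩

/-- Summing `hf` over all `g` would only give `orderOf c • ∑ g, f g = 0`; splitting `G` into the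
cosets of `⟨c⟩` avoids dividing by `orderOf c`. -/
theorem sum_eq_zero_of_forall_sum_mul_pow_eq_zero {G M : Type*} [Group G] [Fintype G]
    [AddCommMonoid M] (c : G) {f : G → M}
    (hf : ∀ g, ∑ i ∈ range (orderOf c), f (g * c ^ i) = 0) : ∑ g, f g = 0 := by
  classical
  calc ∑ g, f g
      = ∑ q : G ⧸ Subgroup.zpowers c, ∑ h : Subgroup.zpowers c, f (q.out * h) :=
        Subgroup.sum_eq_sum_quotient_sum_out_mul _ f
    _ = ∑ q : G ⧸ Subgroup.zpowers c, ∑ i : Fin (orderOf c), f (q.out * c ^ (i : ℕ)) := by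
        simp_rw [← (finEquivZPowers (isOfFinOrder_of_finite c)).sum_comp, finEquivZPowers_apply]
    _ = 0 := sum_eq_zero fun q _ => by
        rw [Fin.sum_univ_eq_sum_range (fun i => f (q.out * c ^ i)), hf]

section LieWord

variable {L : Type*} [LieRing L]

theorem List.foldl_lie_add (l : List L) (x y : L) :
    l.foldl (fun a b => ⁅a, b⁆) (x + y) =
      l.foldl (fun a b => ⁅a, b⁆) x + l.foldl (fun a b => ⁅a, b⁆) y := by
  induction l generalizing x y with
  | nil => rfl
  | cons b l ih => simp only [List.foldl_cons, add_lie, ih]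

theorem List.foldl_lie_zero (l : List L) : l.foldl (fun a b => ⁅a, b⁆) 0 = 0 := by
  induction l with
  | nil => rfl
  | cons b l ih => simpa only [List.foldl_cons, zero_lie] using ih

theorem lie_lie_add_lie_lie_add_lie_lie (x y z : L) :
    ⁅⁅x, y⁆, z⁆ + ⁅⁅y, z⁆, x⁆ + ⁅⁅z, x⁆, y⁆ = 0 := by
  rw [← lie_skew ⁅x, y⁆ z, ← lie_skew ⁅y, z⁆ x, ← lie_skew ⁅z, x⁆ y, ← neg_add, ← neg_add,
    lie_jacobi z x y, neg_zero]

theorem lieWord_jacobi (x y z : L) (l : List L) :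
    lieWord (x :: y :: z :: l) + lieWord (y :: z :: x :: l) + lieWord (z :: x :: y :: l) = 0 := by
  simp only [lieWord, List.foldl_cons]
  rw [← List.foldl_lie_add, ← List.foldl_lie_add, lie_lie_add_lie_lie_add_lie_lie,
    List.foldl_lie_zero]

end LieWord

theorem List.ofFn_comp_swap_mul_swap {m : ℕ} {α : Type*} {b : Fin (m + 3) → α} {x y z : α}
    {l : List α} (h : List.ofFn b = x :: y :: z :: l) :
    List.ofFn (b ∘ (Equiv.swap 0 2 * Equiv.swap 0 1 : Equiv.Perm (Fin (m + 3)))) =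
      y :: z :: x :: l := by
  simp only [List.ofFn_succ, List.cons.injEq] at h ⊢
  obtain ⟨rfl, rfl, rfl, rfl⟩ := h
  simp [swap_apply_def, Fin.ext_iff, Nat.mod_eq_of_lt]

/-- If `n ≥ 3` and `G` is a subgroup of `Sₙ` containing the 3-cycle `(1,2,3)`
(0-indexed: the cycle `0 ↦ 1 ↦ 2 ↦ 0`, written as `(0 2) * (0 1)`), then `G` is Jacobi. -/
theorem subgroup_isJacobi_of_threeCycle_mem {n : ℕ} (hn : 3 ≤ n)
    (G : Subgroup (Equiv.Perm (Fin n)))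
    (hG : Equiv.swap (⟨0, by omega⟩ : Fin n) ⟨2, by omega⟩ *
            Equiv.swap (⟨0, by omega⟩ : Fin n) ⟨1, by omega⟩ ∈ G) :
    IsJacobi (G : Set (Equiv.Perm (Fin n))) := by
  obtain ⟨m, rfl⟩ := Nat.exists_eq_add_of_le' hn
  have hcG : swap 0 2 * swap 0 1 ∈ G := hG
  have hc : orderOf (⟨_, hcG⟩ : G) = 3 := by
    rw [Subgroup.orderOf_mk]
    exact (Perm.isThreeCycle_swap_mul_swap_same (by simp [Fin.ext_iff, Nat.mod_eq_of_lt])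
      (by simp) (by simp [Fin.ext_iff, Nat.mod_eq_of_lt])).orderOf
  intro L _ a
  classical
  rw [← finsum_set_coe_eq_finsum_mem, finsum_eq_sum_of_fintype]
  refine sum_eq_zero_of_forall_sum_mul_pow_eq_zero (G := G) ⟨_, hcG⟩ fun σ => ?_
  obtain ⟨x, y, z, l, hσ⟩ :
      ∃ x y z l, List.ofFn (fun i => a ((σ : Perm _) i)) = x :: y :: z :: l :=
    ⟨_, _, _, _, by rw [List.ofFn_succ, List.ofFn_succ, List.ofFn_succ]⟩
  have h₁ := List.ofFn_comp_swap_mul_swap hσ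
  have h₂ := List.ofFn_comp_swap_mul_swap h₁
  simp only [Function.comp_def, Perm.mul_apply] at h₁ h₂
  simp only [hc, sum_range_succ, sum_range_zero, zero_add, pow_zero, pow_one, sq,
    Subgroup.coe_mul, Perm.mul_apply, OneMemClass.coe_one, Perm.one_apply]
  rw [hσ, h₁, h₂]
  exact lieWord_jacobi x y z l
end

section
/- Let R be an associative ring and a_1,…,a_n ∈ R (n ≥ 1). Then the left-normed commutator bracket satisfies [a_1,…,a_n] = ∑_{i=0}^{n-1} ∑_{(α,β)∈Sh¹(n−i,i)} (−1)^i · a_{β(i)}⋯a_{β(1)} a_{α(1)}⋯a_{α(n−i)}. -/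
/-- An `(s,t)`-shuffle `(α,β)` with `α(1) = 1`: a pair of strictly increasing maps
`α : {1,…,s} → {1,…,s+t}`, `β : {1,…,t} → {1,…,s+t}` with disjoint images and `α(1) = 1`
(everything 0-indexed, so the last condition reads `α 0 = 0`).  This is the set `Sh¹(s,t)`. -/
structure Shuffle1 (s t : ℕ) where
  α : Fin s → Fin (s + t)
  β : Fin t → Fin (s + t)
  mono_alpha : StrictMono α
  mono_beta : StrictMono β
  disj : ∀ i j, α i ≠ β j
  first : ∀ hs : 0 < s, α ⟨0, hs⟩ = ⟨0, Nat.lt_of_lt_of_le hs (Nat.le_add_right s t)⟩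

attribute [local instance 100] LieRing.ofAssociativeRing

open Finset

namespace Finset

theorem sort_eq_filter_finRange {n : ℕ} (T : Finset (Fin n)) :
    T.sort = (List.finRange n).filter (· ∈ T) :=
  T.sortedLT_sort.eq_of_mem_iff ((List.sortedLT_finRange n).pairwise.filter _).sortedLT (by simp)

theorem powerset_map {α β : Type*} (f : α ↪ β) (s : Finset α) :
    (s.map f).powerset = s.powerset.map (mapEmbedding f).toEmbedding := by
  classical
  ext t
  simp only [map_eq_image, powerset_image, mem_image, RelEmbedding.coe_toEmbedding,
    mapEmbedding_apply]

end Finset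

namespace Fin

variable {n : ℕ}

theorem sort_map_succEmb (T : Finset (Fin n)) : (T.map (succEmb n)).sort = T.sort.map succ := by
  simp [sort_eq_filter_finRange, List.finRange_succ, List.filter_map, Function.comp_def]

theorem sort_insert_zero_map_succEmb (T : Finset (Fin n)) :
    (insert 0 (T.map (succEmb n))).sort = 0 :: T.sort.map succ := by
  simp [sort_eq_filter_finRange, List.finRange_succ, List.filter_map, Function.comp_def]

theorem sort_compl_map_succEmb (T : Finset (Fin n)) :
    (T.map (succEmb n))ᶜ.sort = 0 :: Tᶜ.sort.map succ := by
  simp [sort_eq_filter_finRange, List.finRange_succ, List.filter_map, Function.comp_def]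

theorem sort_compl_insert_zero_map_succEmb (T : Finset (Fin n)) :
    (insert 0 (T.map (succEmb n)))ᶜ.sort = Tᶜ.sort.map succ := by
  simp [sort_eq_filter_finRange, List.finRange_succ, List.filter_map, Function.comp_def]

theorem sum_finset_succ {M : Type*} [AddCommMonoid M] (g : Finset (Fin (n + 1)) → M) :
    ∑ T, g T =
      ∑ T : Finset (Fin n), (g (T.map (succEmb n)) + g (insert 0 (T.map (succEmb n)))) := by
  have h0 : (0 : Fin (n + 1)) ∉ univ.map ⟨succ, succ_injective n⟩ := by simp
  rw [← powerset_univ, Fin.univ_succ, cons_eq_insert, sum_powerset_insert h0, sum_add_distrib,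
    powerset_map, sum_map, sum_map]
  rfl

theorem sum_finset_zero_notMem {M : Type*} [AddCommMonoid M] (g : Finset (Fin (n + 1)) → M) :
    ∑ T with 0 ∉ T, g T = ∑ T : Finset (Fin n), g (T.map (succEmb n)) := by
  rw [sum_filter, sum_finset_succ]
  simp

theorem card_compl_of_card_eq {s t : ℕ} {T : Finset (Fin (s + t))} (hT : #T = t) : #Tᶜ = s := by
  rw [card_compl, hT, Fintype.card_fin, Nat.add_sub_cancel]

theorem sum_fiberwise_val {ι M : Type*} [AddCommMonoid M] {s : Finset ι} {g : ι → ℕ}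
    (hg : ∀ x ∈ s, g x < n) (f : ι → M) :
    ∑ i : Fin n, ∑ x ∈ s with g x = i, f x = ∑ x ∈ s, f x := by
  rw [Fin.sum_univ_eq_sum_range (fun k => ∑ x ∈ s with g x = k, f x)]
  exact sum_fiberwise_of_maps_to (fun x hx => mem_range.2 (hg x hx)) f

end Fin

section Ring

variable {R : Type*} [Ring R]

theorem foldl_lie_ofFn_eq_sum {n : ℕ} (b : Fin n → R) (x : R) :
    (List.ofFn b).foldl (fun p q => ⁅p, q⁆) x =
      ∑ T : Finset (Fin n),
        (-1) ^ #T * ((T.sort.map b).reverse.prod * x * (Tᶜ.sort.map b).prod) := by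
  induction n generalizing x with
  | zero => simp [Subsingleton.elim (default : Finset (Fin 0)) ∅]
  | succ n ih =>
    rw [List.ofFn_succ, List.foldl_cons, ih, Fin.sum_finset_succ]
    refine sum_congr rfl fun T _ => ?_
    rw [Fin.sort_map_succEmb, Fin.sort_compl_map_succEmb, Fin.sort_insert_zero_map_succEmb,
      Fin.sort_compl_insert_zero_map_succEmb, card_insert_of_notMem (by simp), card_map]
    simp only [List.map_cons, List.map_map, List.reverse_cons, List.prod_append, List.prod_cons,
      List.prod_nil, Function.comp_def, Ring.lie_def, pow_succ]
    noncomm_ring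

theorem lieWord_ofFn_eq_sum {m : ℕ} (a : Fin (m + 1) → R) :
    lieWord (List.ofFn a) =
      ∑ T with (0 : Fin (m + 1)) ∉ T,
        (-1) ^ #T * ((T.sort.map a).reverse ++ Tᶜ.sort.map a).prod := by
  rw [List.ofFn_succ, lieWord, foldl_lie_ofFn_eq_sum, Fin.sum_finset_zero_notMem]
  refine sum_congr rfl fun T _ => ?_
  rw [Fin.sort_map_succEmb, Fin.sort_compl_map_succEmb, card_map]
  simp only [List.map_cons, List.map_map, List.prod_append, List.prod_cons, Function.comp_def,
    mul_assoc]

end Ring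

namespace Shuffle1

variable {s t : ℕ}

theorem ext {x y : Shuffle1 s t} (hα : x.α = y.α) (hβ : x.β = y.β) : x = y := by
  cases x; cases y; cases hα; cases hβ; rfl

noncomputable def equivFinset (hs : 0 < s) :
    Shuffle1 s t ≃ {T : Finset (Fin (s + t)) // ⟨0, by omega⟩ ∉ T ∧ #T = t} where
  toFun sh := ⟨univ.map ⟨sh.β, sh.mono_beta.injective⟩, fun h => by
    obtain ⟨j, -, hj⟩ := mem_map.1 h
    exact sh.disj ⟨0, hs⟩ j (by rw [sh.first hs]; exact hj.symm), by simp⟩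
  invFun T :=
    { α := T.1ᶜ.orderEmbOfFin (Fin.card_compl_of_card_eq T.2.2)
      β := T.1.orderEmbOfFin T.2.2
      mono_alpha := (orderEmbOfFin _ _).strictMono
      mono_beta := (orderEmbOfFin _ _).strictMono
      disj := fun i j h => mem_compl.1 (h ▸ orderEmbOfFin_mem _ _ i) (orderEmbOfFin_mem _ _ j)
      first := fun hs' => by
        rw [orderEmbOfFin_zero _ hs']
        exact le_antisymm (min'_le _ _ (mem_compl.2 T.2.1)) (Nat.zero_le _) }
  left_inv sh := by
    have hβ : #(univ.map ⟨sh.β, sh.mono_beta.injective⟩) = t := by simp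
    refine ext ?_ ?_
    · refine (orderEmbOfFin_unique (Fin.card_compl_of_card_eq hβ)
        (fun i => mem_compl.2 fun h => ?_) sh.mono_alpha).symm
      obtain ⟨j, -, hj⟩ := mem_map.1 h
      exact sh.disj i j hj.symm
    · exact (orderEmbOfFin_unique hβ (fun j => by simp) sh.mono_beta).symm
  right_inv T := Subtype.ext (map_orderEmbOfFin_univ T.1 T.2.2)

theorem ofFn_equivFinset_symm_β (hs : 0 < s)
    (T : {T : Finset (Fin (s + t)) // ⟨0, by omega⟩ ∉ T ∧ #T = t}) :
    List.ofFn ((equivFinset hs).symm T).β = T.1.sort := by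
  rw [List.ofFn_eq_map, ← listMap_orderEmbOfFin_finRange T.1 T.2.2]
  rfl

theorem ofFn_equivFinset_symm_α (hs : 0 < s)
    (T : {T : Finset (Fin (s + t)) // ⟨0, by omega⟩ ∉ T ∧ #T = t}) :
    List.ofFn ((equivFinset hs).symm T).α = T.1ᶜ.sort := by
  rw [List.ofFn_eq_map, ← listMap_orderEmbOfFin_finRange T.1ᶜ (Fin.card_compl_of_card_eq T.2.2)]
  rfl

theorem finsum_eq_sum_finset {X M : Type*} [AddCommMonoid M] (hs : 0 < s) {N : ℕ} (h : s + t = N)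
    (f : Fin N → X) (F : List X → List X → M) :
    ∑ᶠ sh : Shuffle1 s t,
        F (List.ofFn fun j => f (Fin.cast h (sh.β j))) (List.ofFn fun j => f (Fin.cast h (sh.α j))) =
      ∑ T with ⟨0, by omega⟩ ∉ T ∧ #T = t, F (T.sort.map f) (Tᶜ.sort.map f) := by
  subst h
  simp only [Fin.cast_eq_self, List.ofFn_comp']
  rw [← finsum_comp_equiv (equivFinset hs).symm, finsum_eq_sum_of_fintype]
  simp only [ofFn_equivFinset_symm_β, ofFn_equivFinset_symm_α]
  refine (sum_subtype _ (fun T => ?_)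
    fun T : Finset (Fin (s + t)) => F (T.sort.map f) (Tᶜ.sort.map f)).symm
  simp

end Shuffle1

theorem leftBracket_eq_sum_shuffles_general {R : Type*} [Ring R] (n : ℕ) (a : Fin n → R) :
    lieWord (List.ofFn a) =
      ∑ i : Fin n, ∑ᶠ sh : Shuffle1 (n - (i : ℕ)) (i : ℕ),
        (-1 : R) ^ (i : ℕ) *
          ((List.ofFn fun j => a (Fin.cast (Nat.sub_add_cancel i.isLt.le) (sh.β j))).reverse
            ++ List.ofFn fun j => a (Fin.cast (Nat.sub_add_cancel i.isLt.le) (sh.α j))).prod := by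
  obtain _ | m := n
  · rfl
  have hcard : ∀ T ∈ univ.filter fun T : Finset (Fin (m + 1)) => 0 ∉ T, #T < m + 1 := fun T hT =>
    (card_lt_univ_of_notMem (mem_filter.1 hT).2).trans_eq (Fintype.card_fin _)
  rw [lieWord_ofFn_eq_sum, ← Fin.sum_fiberwise_val hcard]
  refine sum_congr rfl fun i _ => ?_
  rw [Shuffle1.finsum_eq_sum_finset (Nat.sub_pos_of_lt i.isLt) (Nat.sub_add_cancel i.isLt.le) a
    fun l l' => (-1 : R) ^ (i : ℕ) * (l.reverse ++ l').prod, filter_filter]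
  exact sum_congr rfl fun T hT => by rw [(mem_filter.1 hT).2.2]

/-- For elements `a₁,…,aₙ` (`n ≥ 1`) of an associative ring, the left-normed commutator
bracket satisfies
`[a₁,…,aₙ] = ∑_{i=0}^{n-1} ∑_{(α,β) ∈ Sh¹(n−i,i)} (−1)^i · a_{β(i)}⋯a_{β(1)} a_{α(1)}⋯a_{α(n−i)}`. -/
theorem leftBracket_eq_sum_shuffles {R : Type*} [Ring R] (n : ℕ) (hn : 1 ≤ n) (a : Fin n → R) :
    lieWord (List.ofFn a) =
      ∑ i : Fin n, ∑ᶠ sh : Shuffle1 (n - (i : ℕ)) (i : ℕ),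
        (-1 : R) ^ (i : ℕ) *
          ((List.ofFn fun j => a (Fin.cast (Nat.sub_add_cancel i.isLt.le) (sh.β j))).reverse
            ++ List.ofFn fun j => a (Fin.cast (Nat.sub_add_cancel i.isLt.le) (sh.α j))).prod :=
  leftBracket_eq_sum_shuffles_general n a
end

section
/- For any n ≥ 2 the kernel of β_n is a free abelian group of rank (n−1)!·(n−1). -/
attribute [local instance] LieRing.ofAssociativeRing

/-- The `ℤ`-linear map `βₙ : ℤ[Sₙ] → ℤ⟨x₁,…,xₙ⟩`, from the free `ℤ`-module with basis `Sₙ`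
to the free associative ring on `x₁,…,xₙ`, defined on basis elements by
`βₙ(σ) = [x_{σ(1)},…,x_{σ(n)}]` (left-normed commutator bracket). -/
noncomputable def betaMap (n : ℕ) :
    (Equiv.Perm (Fin n) →₀ ℤ) →ₗ[ℤ] FreeAlgebra ℤ (Fin n) :=
  Finsupp.linearCombination ℤ fun σ => lieWord (List.ofFn fun i => FreeAlgebra.ι ℤ (σ i))

/-- `Sum(T) = ∑_{σ ∈ T} σ ∈ ℤ[Sₙ]` for a subset `T ⊆ Sₙ`. -/
noncomputable def SumT {n : ℕ} (T : Set (Equiv.Perm (Fin n))) : Equiv.Perm (Fin n) →₀ ℤ :=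
  ∑ᶠ σ ∈ T, Finsupp.single σ 1

/-!
By the Jacobi identity and antisymmetry, every left-normed bracket
`[x_{σ(1)},…,x_{σ(n)}]` is a `ℤ`-combination of brackets that start with `x₁` (the letter
`0 : Fin n` below), so the image of
`βₙ` is spanned by the `(n-1)!` brackets `[x₁, x_{τ(2)},…,x_{τ(n)}]`. These are linearly
independent: the left quotient by the letter `x₁` (the coefficient of `x₁ w`, as a function of the
word `w`) sends `[x₁, y₂,…,yₙ]` to the monomial `y₂ ⋯ yₙ` when `x₁` is none of the `yᵢ`, since
`[u, y] = u y - y u` and no word of `y u` begins with `x₁`. So the image has rank `(n-1)!`, and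
rank–nullity gives the kernel, free as a subgroup of a free abelian group of finite rank, rank
`n! - (n-1)! = (n-1)!·(n-1)`.
-/

section LieWord

variable {L : Type*} [LieRing L]

lemma lieWord_append_singleton {l : List L} (hl : l ≠ []) (a : L) :
    lieWord (l ++ [a]) = ⁅lieWord l, a⁆ := by
  obtain ⟨x, xs, rfl⟩ := List.exists_cons_of_ne_nil hl
  simp [lieWord, List.foldl_append]

lemma lie_mem_span_image {S : Set L} {x : L} (hx : x ∈ Submodule.span ℤ S) (y : L) :
    ⁅x, y⁆ ∈ Submodule.span ℤ ((⁅·, y⁆) '' S) :=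
  Submodule.apply_mem_span_image_of_mem_span
    (AddMonoidHom.mk' (⁅·, y⁆) fun a b => add_lie a b y).toIntLinearMap hx

variable {X : Type*} (f : X → L)

lemma lie_lieWord_mem_span {l : List X} (hl : l ≠ []) (v : L) :
    ⁅v, lieWord (l.map f)⁆ ∈
      Submodule.span ℤ {lieWord (v :: p.map f) | (p : List X) (_ : p.Perm l)} := by
  induction l using List.reverseRecOn generalizing v with
  | nil => exact absurd rfl hl
  | append_singleton l a ih =>
    rcases eq_or_ne l [] with rfl | hl
    · exact Submodule.subset_span ⟨[a], List.Perm.refl _, rfl⟩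
    rw [List.map_append, List.map_singleton, lieWord_append_singleton (by simpa using hl),
      leibniz_lie, ← lie_skew _ ⁅v, f a⁆]
    refine add_mem ?_ (neg_mem ?_)
    · refine Submodule.span_le.2 ?_ (lie_mem_span_image (ih hl v) (f a))
      rintro _ ⟨_, ⟨p, hp, rfl⟩, rfl⟩
      refine Submodule.subset_span ⟨p ++ [a], hp.append_right [a], ?_⟩
      simp [lieWord, List.foldl_append]
    · refine Submodule.span_mono ?_ (ih hl ⁅v, f a⁆)
      rintro _ ⟨p, hp, rfl⟩
      exact ⟨a :: p, (hp.cons a).trans (List.perm_append_singleton a l).symm, rfl⟩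

lemma lieWord_mem_span_perm_cons {l : List X} {c : X} (hc : c ∈ l) :
    lieWord (l.map f) ∈
      Submodule.span ℤ {lieWord ((c :: p).map f) | (p : List X) (_ : (c :: p).Perm l)} := by
  induction l using List.reverseRecOn with
  | nil => simp at hc
  | append_singleton l a ih =>
    rcases eq_or_ne l [] with rfl | hl
    · obtain rfl : c = a := by simpa using hc
      exact Submodule.subset_span ⟨[], List.Perm.refl _, rfl⟩
    rw [List.map_append, List.map_singleton, lieWord_append_singleton (by simpa using hl)]
    by_cases hcl : c ∈ l
    · refine Submodule.span_le.2 ?_ (lie_mem_span_image (ih hcl) (f a))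
      rintro _ ⟨_, ⟨p, hp, rfl⟩, rfl⟩
      refine Submodule.subset_span ⟨p ++ [a], hp.append_right [a], ?_⟩
      simp [lieWord, List.foldl_append]
    · obtain rfl : c = a := by simpa [hcl] using hc
      rw [← lie_skew]
      refine neg_mem (Submodule.span_mono ?_ (lie_lieWord_mem_span f hl (f c)))
      rintro _ ⟨p, hp, rfl⟩
      exact ⟨p, (hp.cons c).trans (List.perm_append_singleton c l).symm, rfl⟩

end LieWord

open MonoidAlgebra FreeMonoid

section LeftQuotient

variable (R : Type*) [Semiring R] {X : Type*}

noncomputable def leftQuotient (c : X) :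
    MonoidAlgebra R (FreeMonoid X) →ₗ[R] MonoidAlgebra R (FreeMonoid X) :=
  (coeffLinearEquiv R).symm.toLinearMap ∘ₗ
    Finsupp.lcomapDomain (of c * ·) (mul_right_injective _) ∘ₗ (coeffLinearEquiv R).toLinearMap

variable {R}

@[simp]
lemma coeff_leftQuotient (c : X) (u : MonoidAlgebra R (FreeMonoid X)) (t : FreeMonoid X) :
    (leftQuotient R c u).coeff t = u.coeff (of c * t) := rfl

lemma leftQuotient_single_of (c : X) (r : R) :
    leftQuotient R c (single (of c) r) = single 1 r := by
  ext t
  classical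
  simp only [coeff_leftQuotient, coeff_single, Finsupp.single_apply]
  simp [eq_comm]

lemma leftQuotient_single_of_mul {c y : X} (h : y ≠ c) (r : R)
    (u : MonoidAlgebra R (FreeMonoid X)) : leftQuotient R c (single (of y) r * u) = 0 := by
  ext t
  refine coeff_single_mul_of_forall_mul_ne _ _ fun d hd => h ?_
  exact (by simpa using congrArg toList hd : y = c ∧ d = t).1

lemma coeff_mul_single_of_mul_of [DecidableEq X] (u : MonoidAlgebra R (FreeMonoid X)) (y z : X)
    (r : R) (w : FreeMonoid X) :
    (u * single (of y) r).coeff (w * of z) = if z = y then u.coeff w * r else 0 := by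
  split_ifs with h
  · subst h
    exact coeff_mul_single_eq_coeff_mul _ fun d _ => mul_left_inj _
  · refine coeff_mul_single_of_forall_mul_ne _ _ fun d hd => h ?_
    exact (by simpa using congrArg toList hd : d = w ∧ y = z).2.symm

lemma leftQuotient_mul_single_of {c y : X} (h : y ≠ c) (u : MonoidAlgebra R (FreeMonoid X))
    (r : R) : leftQuotient R c (u * single (of y) r) = leftQuotient R c u * single (of y) r := by
  classical
  ext t
  obtain ⟨t, rfl⟩ := ofList.surjective t
  obtain rfl | ⟨t, z, rfl⟩ := List.eq_nil_or_concat' t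
  · rw [ofList_nil, coeff_leftQuotient, mul_one]
    have hc : ∀ d : FreeMonoid X, d * of y ≠ of c := fun d hd =>
      h (by simpa [List.append_eq_singleton_iff] using congrArg toList hd : toList d = [] ∧ y = c).2
    have h1 : ∀ d : FreeMonoid X, d * of y ≠ 1 := fun d hd => by simpa using congrArg toList hd
    rw [coeff_mul_single_of_forall_mul_ne _ _ hc, coeff_mul_single_of_forall_mul_ne _ _ h1]
  · rw [ofList_append, ofList_singleton, coeff_leftQuotient, ← mul_assoc,
      coeff_mul_single_of_mul_of, coeff_mul_single_of_mul_of, coeff_leftQuotient]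

end LeftQuotient

section Independence

variable {R : Type*} [CommRing R]

lemma LieHom.map_lieWord {L L' : Type*} [LieRing L] [LieAlgebra R L] [LieRing L']
    [LieAlgebra R L'] (f : L →ₗ⁅R⁆ L') (l : List L) : f (lieWord l) = lieWord (l.map f) := by
  obtain _ | ⟨x, xs⟩ := l
  · exact map_zero f
  induction xs generalizing x with
  | nil => rfl
  | cons y ys ih => exact (ih ⁅x, y⁆).trans (by simp [lieWord])

variable {X : Type*}

lemma equivMonoidAlgebraFreeMonoid_ι (x : X) :
    FreeAlgebra.equivMonoidAlgebraFreeMonoid (FreeAlgebra.ι R x) = single (of x) (1 : R) := by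
  simp [FreeAlgebra.equivMonoidAlgebraFreeMonoid]

lemma leftQuotient_lieWord_single_of {c : X} {ys : List X} (hc : c ∉ ys) :
    leftQuotient R c (lieWord ((c :: ys).map fun x => single (of x) (1 : R))) =
      single (ofList ys) 1 := by
  induction ys using List.reverseRecOn with
  | nil => exact leftQuotient_single_of c 1
  | append_singleton ys y ih =>
    have hy : y ≠ c := fun h => hc (by simp [h])
    rw [← List.cons_append, List.map_append, List.map_singleton,
      lieWord_append_singleton (by simp), Ring.lie_def, map_sub, leftQuotient_mul_single_of hy,
      leftQuotient_single_of_mul hy, ih (fun h => hc (by simp [h])), sub_zero, single_mul_single,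
      mul_one, ofList_append, ofList_singleton]

lemma linearIndependent_lieWord_ofFn_fix_zero (m : ℕ) :
    LinearIndependent R fun τ : {τ : Equiv.Perm (Fin (m + 1)) // τ 0 = 0} =>
      lieWord (List.ofFn fun i => FreeAlgebra.ι R (τ.1 i)) := by
  let tail (τ : {τ : Equiv.Perm (Fin (m + 1)) // τ 0 = 0}) : List (Fin (m + 1)) :=
    List.ofFn fun i : Fin m => τ.1 i.succ
  have htail : Function.Injective tail := by
    intro τ τ' h
    refine Subtype.ext (Equiv.ext (Fin.cases (by rw [τ.2, τ'.2]) fun i => ?_))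
    exact congrFun (List.ofFn_inj.1 h) i
  have h0 (τ : {τ : Equiv.Perm (Fin (m + 1)) // τ 0 = 0}) : 0 ∉ tail τ := by
    simp only [tail, List.mem_ofFn, not_exists]
    exact fun i h => Fin.succ_ne_zero i (τ.1.injective (h.trans τ.2.symm))
  let E := (FreeAlgebra.equivMonoidAlgebraFreeMonoid (R := R) (X := Fin (m + 1))).toAlgHom
  refine LinearIndependent.of_comp (leftQuotient R 0 ∘ₗ E.toLinearMap) ?_
  convert (MonoidAlgebra.basis _ R).linearIndependent.comp (ofList ∘ tail)
    (ofList.injective.comp htail) using 1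
  funext τ
  have : List.ofFn (fun i => FreeAlgebra.ι R (τ.1 i)) = (0 :: tail τ).map (FreeAlgebra.ι R) := by
    rw [List.ofFn_succ, τ.2, List.map_cons, List.map_ofFn]; rfl
  simp only [LinearMap.comp_apply, Function.comp_apply, MonoidAlgebra.basis_apply, this]
  rw [← leftQuotient_lieWord_single_of (h0 τ), AlgHom.toLinearMap_apply, ← AlgHom.coe_toLieHom,
    LieHom.map_lieWord, List.map_map]
  congr 3
  exact funext equivMonoidAlgebraFreeMonoid_ι

end Independence

lemma card_perm_fixing {α : Type*} [Fintype α] [DecidableEq α] (a : α) :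
    Fintype.card {σ : Equiv.Perm α // σ a = a} = (Fintype.card α - 1).factorial := by
  let e : {σ : Equiv.Perm α // σ a = a} ≃ Equiv.Perm {x // x ≠ a} :=
    (Equiv.subtypeEquivRight fun σ => by simp).trans
      (Equiv.Perm.subtypeEquivSubtypePerm (· ≠ a)).symm
  rw [Fintype.card_congr e, Fintype.card_perm, Fintype.card_subtype_compl, Fintype.card_subtype_eq]

lemma List.Perm.exists_ofFn_eq {n : ℕ} {l : List (Fin n)} {σ : Equiv.Perm (Fin n)}
    (h : l.Perm (List.ofFn σ)) : ∃ τ : Equiv.Perm (Fin n), List.ofFn τ = l := by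
  have hlen : l.length = n := by rw [h.length_eq, List.length_ofFn]
  have hnd : l.Nodup := h.nodup_iff.2 (List.nodup_ofFn.2 σ.injective)
  have hmem (x : Fin n) : x ∈ l := h.mem_iff.2 (List.mem_ofFn.2 (σ.surjective x))
  refine ⟨(finCongr hlen.symm).trans (hnd.getEquivOfForallMemList l hmem), ?_⟩
  conv_rhs => rw [← List.ofFn_get l, List.ofFn_congr hlen]
  rfl

lemma range_betaMap (m : ℕ) :
    LinearMap.range (betaMap (m + 1)) = Submodule.span ℤ (Set.range
      fun τ : {τ : Equiv.Perm (Fin (m + 1)) // τ 0 = 0} =>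
        lieWord (List.ofFn fun i => FreeAlgebra.ι ℤ (τ.1 i))) := by
  rw [betaMap, Finsupp.range_linearCombination]
  refine le_antisymm (Submodule.span_le.2 ?_) (Submodule.span_mono ?_)
  · rintro _ ⟨σ, rfl⟩
    have h0 : (0 : Fin (m + 1)) ∈ List.ofFn σ := List.mem_ofFn.2 (σ.surjective 0)
    change lieWord (List.ofFn (FreeAlgebra.ι ℤ ∘ σ)) ∈ _
    rw [← List.map_ofFn]
    refine Submodule.span_mono ?_ (lieWord_mem_span_perm_cons (FreeAlgebra.ι ℤ) h0)
    rintro _ ⟨p, hp, rfl⟩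
    obtain ⟨τ, hτ⟩ := hp.exists_ofFn_eq
    refine ⟨⟨τ, (by simpa [List.ofFn_succ] using hτ : _ ∧ _).1⟩, ?_⟩
    simp only [← hτ, List.map_ofFn]
    rfl
  · rintro _ ⟨τ, rfl⟩
    exact ⟨τ.1, rfl⟩

/-- For `n ≥ 2`, the kernel of `βₙ` is a free abelian group of rank `(n−1)!·(n−1)`. -/
theorem ker_betaMap_free_rank (n : ℕ) (hn : 2 ≤ n) :
    Module.Free ℤ (LinearMap.ker (betaMap n)) ∧
      Module.finrank ℤ (LinearMap.ker (betaMap n)) = (n - 1).factorial * (n - 1) := by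
  obtain ⟨m, rfl⟩ : ∃ m, n = m + 1 := ⟨n - 1, by omega⟩
  refine ⟨inferInstance, ?_⟩
  have hrange : Module.finrank ℤ (LinearMap.range (betaMap (m + 1))) = m.factorial := by
    rw [range_betaMap]
    refine (finrank_span_eq_card (linearIndependent_lieWord_ofFn_fix_zero m)).trans ?_
    rw [card_perm_fixing, Fintype.card_fin, Nat.add_sub_cancel]
  have hsum := (LinearMap.ker (betaMap (m + 1))).finrank_quotient_add_finrank
  rw [(betaMap (m + 1)).quotKerEquivRange.finrank_eq, hrange, Module.finrank_finsupp_self,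
    Fintype.card_perm, Fintype.card_fin, Nat.factorial_succ] at hsum
  rw [Nat.add_sub_cancel]
  linarith
end
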